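/- arXiv:2504.02387 — 3 statements merged into one kernel-verified Lean document; each statement's English description precedes it below -/
import Mathlib

section
/- Let p be a prime and m ≥ 2. Let H = ℤ_{p²}^{m−1} × ℤ_p². If h₁,...,h_r are independently and uniformly random elements of H and w₁,...,w_r ∈ ℤ_{p²} are fixed coefficients, not all zero, then the probability that w₁h₁ + ⋯ + w_r h_r = 0 is at most 1/p^{m−1}. -/
/-!
The map `(h₁, …, h_r) ↦ ∑ wᵢ hᵢ` is a group homomorphism, so the probability that it vanishes
is `1 / |range|`. If `w_j ≠ 0`, the range contains `w_j • x` for every `x ∈ H`. Lifting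
`(ℤ_p)^{m-1}` coordinatewise into `(ℤ_{p²})^{m-1} × 0 ⊆ H` and then multiplying by `w_j` is
injective, since a difference of two distinct residues in `[0, p)` is a unit modulo `p²`; hence
the range has at least `p^{m-1}` elements.
-/

open Finset

section WeightedSum

variable {ι M : Type*} [Fintype ι] [AddCommGroup M]

def weightedSumHom (c : ι → ℕ) : (ι → M) →+ M where
  toFun h := ∑ i, c i • h i
  map_zero' := by simp
  map_add' x y := by simp only [Pi.add_apply, smul_add, sum_add_distrib]

@[simp]
theorem weightedSumHom_apply (c : ι → ℕ) (h : ι → M) :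
    weightedSumHom c h = ∑ i, c i • h i := rfl

theorem nsmul_mem_range_weightedSumHom [DecidableEq ι] (c : ι → ℕ) (j : ι) (x : M) :
    c j • x ∈ (weightedSumHom (M := M) c).range :=
  ⟨Pi.single j x, by simp [Pi.single_apply]⟩

theorem card_le_card_range_weightedSumHom [DecidableEq ι] [Finite M] {α : Type*} [Fintype α]
    (c : ι → ℕ) (j : ι) (f : α → M) (hf : Function.Injective fun a => c j • f a) :
    Fintype.card α ≤ Nat.card (weightedSumHom (M := M) c).range := by
  rw [← Nat.card_eq_fintype_card]
  exact Nat.card_le_card_of_injective (fun a => ⟨c j • f a, nsmul_mem_range_weightedSumHom c j _⟩)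
    fun a b hab => hf (congrArg Subtype.val hab)

end WeightedSum

theorem AddMonoidHom.card_filter_eq_zero_div_card_le {G K : Type*} [AddGroup G] [Fintype G]
    [AddGroup K] [DecidableEq K] (φ : G →+ K) {n : ℕ} (hn : 0 < n) (h : n ≤ Nat.card φ.range) :
    (#{x | φ x = 0} : ℝ) / Fintype.card G ≤ 1 / n := by
  have hker : #{x | φ x = 0} = Nat.card φ.ker := by
    rw [← Nat.card_eq_finsetCard]
    exact Nat.card_congr (Equiv.subtypeEquivRight fun x => by simp)
  have hcard : Nat.card φ.ker * Nat.card φ.range = Fintype.card G := by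
    rw [← AddSubgroup.index_ker φ, φ.ker.card_mul_index, Nat.card_eq_fintype_card]
  have hker_pos : (0 : ℝ) < Nat.card φ.ker := by exact_mod_cast Nat.card_pos
  rw [← hcard, hker, Nat.cast_mul, div_mul_cancel_left₀ hker_pos.ne', one_div]
  exact inv_anti₀ (by exact_mod_cast hn) (by exact_mod_cast h)

theorem ZMod.injective_nsmul_natCast_val {p k : ℕ} [hp : Fact p.Prime] {c : ZMod (p ^ k)}
    (hc : c ≠ 0) : Function.Injective fun a : ZMod p => c.val • (a.val : ZMod (p ^ k)) := by
  have ne_of_val_lt : ∀ a b : ZMod p, b.val < a.val →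
      c.val • (a.val : ZMod (p ^ k)) ≠ c.val • (b.val : ZMod (p ^ k)) := by
    intro a b hlt heq
    rw [nsmul_eq_mul, nsmul_eq_mul, ZMod.natCast_val, ZMod.cast_id', id] at heq
    have hunit : IsUnit ((a.val - b.val : ℕ) : ZMod (p ^ k)) := by
      refine (ZMod.isUnit_iff_coprime _ _).mpr (Nat.Coprime.pow_right _ ?_)
      exact Nat.coprime_comm.mp ((hp.out.coprime_iff_not_dvd).mpr
        (Nat.not_dvd_of_pos_of_lt (by omega) (by have := a.val_lt; omega)))
    apply hc
    apply hunit.mul_left_eq_zero.mp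
    rw [Nat.cast_sub hlt.le, mul_sub, heq, sub_self]
  intro a b h
  rcases lt_trichotomy a.val b.val with hab | hab | hab
  · exact absurd h.symm (ne_of_val_lt b a hab)
  · exact ZMod.val_injective _ hab
  · exact absurd h (ne_of_val_lt a b hab)

theorem stmt11_general (p m : ℕ) [Fact p.Prime] (r : ℕ)
    (w : Fin r → ZMod (p ^ 2)) (hw : w ≠ 0) :
    ((Finset.univ.filter
        (fun h : Fin r → (Fin (m - 1) → ZMod (p ^ 2)) × (ZMod p × ZMod p) =>
          ∑ i, (w i).val • h i = 0)).card : ℝ) /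
      (Fintype.card (Fin r → (Fin (m - 1) → ZMod (p ^ 2)) × (ZMod p × ZMod p)) : ℝ) ≤
    1 / (p : ℝ) ^ (m - 1) := by
  obtain ⟨j, hj⟩ := Function.ne_iff.mp hw
  let f : (Fin (m - 1) → ZMod p) → (Fin (m - 1) → ZMod (p ^ 2)) × (ZMod p × ZMod p) :=
    fun v => (fun k => ((v k).val : ZMod (p ^ 2)), 0)
  have hinj : Function.Injective fun v => (w j).val • f v := by
    intro u v huv
    funext k
    exact ZMod.injective_nsmul_natCast_val hj (congrFun (congrArg Prod.fst huv) k)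
  have hrange := card_le_card_range_weightedSumHom (fun i => (w i).val) j f hinj
  rw [Fintype.card_fun, Fintype.card_fin, ZMod.card] at hrange
  exact_mod_cast AddMonoidHom.card_filter_eq_zero_div_card_le _
    (pow_pos (Fact.out : p.Prime).pos _) hrange

theorem stmt11 (p m : ℕ) [Fact p.Prime] (hm : 2 ≤ m) (r : ℕ)
    (w : Fin r → ZMod (p ^ 2)) (hw : w ≠ 0) :
    ((Finset.univ.filter
        (fun h : Fin r → (Fin (m - 1) → ZMod (p ^ 2)) × (ZMod p × ZMod p) =>
          ∑ i, (w i).val • h i = 0)).card : ℝ) /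
      (Fintype.card (Fin r → (Fin (m - 1) → ZMod (p ^ 2)) × (ZMod p × ZMod p)) : ℝ) ≤
    1 / (p : ℝ) ^ (m - 1) :=
  stmt11_general p m r w hw
end

section
/- Let t ≥ 1, let κ₁,...,κ_t ≥ 2 be integers, and let ℓ_{i,j} (for 2 ≤ i ≤ t, 1 ≤ j ≤ i−1) satisfy 0 ≤ ℓ_{i,j} ≤ κ_j − 1. Consider the commutative monoid Γ of monomials x₁^{j₁}⋯x_t^{j_t} with 0 ≤ j_i ≤ κ_i − 1, with multiplication given by adding exponents and reducing via the rewriting rules x₁^{κ₁} = 1 and x_i^{κ_i} = x₁^{ℓ_{i,1}}⋯x_{i−1}^{ℓ_{i,i−1}}. Then every element of Γ is invertible; in particular, x_i^{κ₁κ₂⋯κ_i} = 1 for each i, so Γ is an abelian group of order κ₁κ₂⋯κ_t. -/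
/-!
Write the monoid additively, with generators `gᵢ = [eᵢ]`. Since `κᵢ • gᵢ` is a combination of
generators of smaller index, induction along the index order gives `(∏_{j ≤ i} κⱼ) • gᵢ = 0`; so every
element has finite order and is invertible. Reducing exponents from the top index down, every class
has a representative with `aᵢ < κᵢ`, because a relation at index `i` only changes exponents below
`i`. These representatives are pairwise inequivalent: classes map to `ℤ^ι` modulo the lattice spanned
by the relation vectors, which form a triangular matrix with diagonal `κ`, and no nonzero lattice
vector has all coordinates `|dᵢ| < κᵢ`. Hence the quotient has `∏ κᵢ` elements.
-/

open Finset

section Triangular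

variable {ι M : Type*} [Fintype ι] [LinearOrder ι] [AddCommMonoid M]
  {κ : ι → ℕ} {ℓ : ι → ι → ℕ} {g : ι → M}

theorem prod_le_nsmul_eq_zero_of_triangular
    (hg : ∀ i, κ i • g i = ∑ j ∈ univ.filter (· < i), ℓ i j • g j) (i : ι) :
    (∏ j ∈ univ.filter (· ≤ i), κ j) • g i = 0 := by
  induction i using WellFoundedLT.induction with
  | ind i ih =>
  have hsplit : ∏ j ∈ univ.filter (· ≤ i), κ j = κ i * ∏ j ∈ univ.filter (· < i), κ j := by
    rw [← prod_insert (by simp)]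
    congr 1
    ext j
    simp [le_iff_lt_or_eq, or_comm]
  rw [hsplit, mul_comm, mul_smul, hg, smul_sum]
  refine sum_eq_zero fun j hj => ?_
  have hji : j < i := by simpa using hj
  obtain ⟨k, hk⟩ : ∏ m ∈ univ.filter (· ≤ j), κ m ∣ ∏ m ∈ univ.filter (· < i), κ m :=
    prod_dvd_prod_of_subset _ _ _ fun m hm => by
      simp only [mem_filter, mem_univ, true_and] at hm ⊢
      exact hm.trans_lt hji
  rw [hk, smul_comm, mul_comm, mul_smul, ih j hji, smul_zero, smul_zero]

theorem exists_reduce_at_of_triangular (hκ : ∀ i, 0 < κ i)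
    (hg : ∀ i, κ i • g i = ∑ j ∈ univ.filter (· < i), ℓ i j • g j) (a : ι → ℕ) (i : ι) :
    ∃ b : ι → ℕ, b i < κ i ∧ (∀ j, i < j → b j = a j) ∧ ∑ j, b j • g j = ∑ j, a j • g j := by
  set v : ι → ℕ := fun j => if j < i then ℓ i j else 0
  have hv : ∀ j, i ≤ j → v j = 0 := fun j hj => if_neg hj.not_gt
  refine ⟨Function.update a i (a i % κ i) + (a i / κ i) • v, ?_, fun j hj => ?_, ?_⟩
  · simpa [hv i le_rfl] using Nat.mod_lt _ (hκ i)
  · simp [hv j hj.le, hj.ne']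
  · have ha : a = Function.update a i (a i % κ i) + Pi.single i (a i / κ i * κ i) := by
      funext j
      rcases eq_or_ne j i with rfl | hj
      · simp [Nat.mod_add_div']
      · simp [hj]
    have hrel : ∑ j, v j • g j = κ i • g i := by
      rw [hg, sum_filter]
      simp [v, ite_smul]
    simp_rw [← Fintype.linearCombination_apply ℕ] at hrel ⊢
    conv_rhs => rw [ha]
    rw [map_add, map_add, map_smul, hrel, Fintype.linearCombination_apply_single, mul_smul]

theorem exists_lt_sum_nsmul_eq_of_triangular (hκ : ∀ i, 0 < κ i)
    (hg : ∀ i, κ i • g i = ∑ j ∈ univ.filter (· < i), ℓ i j • g j) (a : ι → ℕ) :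
    ∃ b : ι → ℕ, (∀ i, b i < κ i) ∧ ∑ i, b i • g i = ∑ i, a i • g i := by
  suffices ∀ s : Finset ι, ∃ b : ι → ℕ, (∀ i ∈ s, b i < κ i) ∧
      ∑ i, b i • g i = ∑ i, a i • g i by
    simpa using this univ
  intro s
  induction s using Finset.induction_on_min with
  | empty => exact ⟨a, by simp, rfl⟩
  | insert m s hm ih =>
    obtain ⟨b, hb, hsum⟩ := ih
    obtain ⟨b', hbm, habove, hsum'⟩ := exists_reduce_at_of_triangular hκ hg b m
    refine ⟨b', ?_, hsum'.trans hsum⟩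
    simp only [mem_insert, forall_eq_or_imp]
    exact ⟨hbm, fun i hi => habove i (hm i hi) ▸ hb i hi⟩

end Triangular

namespace Matrix

theorem eq_zero_of_abs_vecMul_lt_abs_diag {ι : Type*} [Fintype ι] [LinearOrder ι]
    {R : Matrix ι ι ℤ} (hR : ∀ i j, i < j → R i j = 0) {n : ι → ℤ}
    (h : ∀ j, |(n ᵥ* R) j| < |R j j|) : n = 0 := by
  suffices ∀ i, n i = 0 from funext this
  intro i
  induction i using WellFoundedGT.induction with
  | ind i ih =>
  have hcoord : (n ᵥ* R) i = n i * R i i := by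
    refine sum_eq_single i (fun m _ hmi => ?_) (by simp)
    rcases hmi.lt_or_gt with hlt | hgt
    · simp [hR m i hlt]
    · simp [ih m hgt]
  have hi := h i
  rw [hcoord, abs_mul] at hi
  have : |n i| < 1 := by nlinarith [abs_nonneg (n i), abs_nonneg (R i i)]
  simpa using this

end Matrix

theorem AddCon.mk'_eq_sum_nsmul_single {ι : Type*} [Fintype ι] (c : AddCon (ι →₀ ℕ))
    (a : ι →₀ ℕ) : c.mk' a = ∑ i, a i • c.mk' (Finsupp.single i 1) := by
  conv_lhs => rw [← Finsupp.univ_sum_single a]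
  simp_rw [map_sum, ← map_nsmul, Finsupp.smul_single_one]

section Presentation

variable {ι : Type*} [LinearOrder ι] (κ : ι → ℕ) (ℓ : ι → ι → ℕ)

def relationMatrix : Matrix ι ι ℤ :=
  fun i j => (if i = j then (κ i : ℤ) else 0) - if j < i then (ℓ i j : ℤ) else 0

noncomputable def relationLatticeHom :
    (ι →₀ ℕ) →+ (ι → ℤ) ⧸ Submodule.span ℤ (Set.range fun i => relationMatrix κ ℓ i) :=
  (Submodule.mkQ _).toAddMonoidHom.comp
    (AddMonoidHom.pi fun j => (Nat.castAddMonoidHom ℤ).comp (Finsupp.applyAddHom j))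

theorem relationLatticeHom_apply (a : ι →₀ ℕ) :
    relationLatticeHom κ ℓ a = Submodule.Quotient.mk fun j => (a j : ℤ) :=
  rfl

variable [Fintype ι]

def presentationRel (x y : ι →₀ ℕ) : Prop :=
  ∃ i, x = Finsupp.single i (κ i) ∧ y = ∑ j ∈ univ.filter (· < i), Finsupp.single j (ℓ i j)

noncomputable abbrev presentationCon : AddCon (ι →₀ ℕ) := addConGen (presentationRel κ ℓ)

theorem presentationCon_relation (i : ι) :
    κ i • (presentationCon κ ℓ).mk' (Finsupp.single i 1) =
      ∑ j ∈ univ.filter (· < i), ℓ i j • (presentationCon κ ℓ).mk' (Finsupp.single j 1) := by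
  have hrel : (presentationCon κ ℓ).mk' (Finsupp.single i (κ i)) =
      (presentationCon κ ℓ).mk' (∑ j ∈ univ.filter (· < i), Finsupp.single j (ℓ i j)) :=
    (AddCon.eq _).mpr (AddConGen.Rel.of _ _ ⟨i, rfl, rfl⟩)
  simp_rw [← map_nsmul, Finsupp.smul_single_one, hrel, map_sum]

theorem presentationCon_le_ker_relationLatticeHom :
    presentationCon κ ℓ ≤ AddCon.ker (relationLatticeHom κ ℓ) := by
  refine AddCon.addConGen_le.mpr ?_
  rintro _ _ ⟨i, rfl, rfl⟩
  rw [AddCon.ker_rel, relationLatticeHom_apply, relationLatticeHom_apply, Submodule.Quotient.eq]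
  refine Submodule.subset_span ⟨i, funext fun j => ?_⟩
  simp [relationMatrix, Finsupp.single_apply, Finsupp.finsetSum_apply]

theorem presentationCon_eq_of_mk'_eq {a b : ι →₀ ℕ} (ha : ∀ i, a i < κ i) (hb : ∀ i, b i < κ i)
    (h : (presentationCon κ ℓ).mk' a = (presentationCon κ ℓ).mk' b) : a = b := by
  have hker := presentationCon_le_ker_relationLatticeHom κ ℓ ((AddCon.eq _).mp h)
  rw [AddCon.ker_rel, relationLatticeHom_apply, relationLatticeHom_apply,
    Submodule.Quotient.eq, Submodule.mem_span_range_iff_exists_fun] at hker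
  obtain ⟨n, hn⟩ := hker
  rw [← Matrix.vecMul_eq_sum] at hn
  have hn0 : n = 0 := by
    refine Matrix.eq_zero_of_abs_vecMul_lt_abs_diag (R := relationMatrix κ ℓ)
      (fun i j hij => ?_) fun j => ?_
    · simp [relationMatrix, hij.ne, hij.not_gt]
    · rw [hn]
      have haj := ha j
      have hbj := hb j
      simp [relationMatrix, abs_sub_lt_iff]
      omega
  ext j
  have hj := congrFun hn j
  simp only [hn0, Matrix.zero_vecMul, Pi.zero_apply, Pi.sub_apply] at hj
  omega

theorem presentationCon_nsmul_single_eq_zero (i : ι) :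
    (presentationCon κ ℓ).mk' ((∏ j ∈ univ.filter (· ≤ i), κ j) • Finsupp.single i 1) = 0 := by
  rw [map_nsmul]
  exact prod_le_nsmul_eq_zero_of_triangular (presentationCon_relation κ ℓ) i

theorem presentationCon_exists_add_eq_zero (hκ : ∀ i, 0 < κ i)
    (x : (presentationCon κ ℓ).Quotient) : ∃ y, x + y = 0 := by
  obtain ⟨a, rfl⟩ := AddCon.mk'_surjective x
  have hN : (∏ i, κ i) • (presentationCon κ ℓ).mk' a = 0 := by
    rw [AddCon.mk'_eq_sum_nsmul_single, smul_sum]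
    refine sum_eq_zero fun i _ => ?_
    obtain ⟨k, hk⟩ : ∏ j ∈ univ.filter (· ≤ i), κ j ∣ ∏ j, κ j :=
      prod_dvd_prod_of_subset _ _ _ (subset_univ _)
    rw [smul_comm, hk, mul_comm, mul_smul,
      prod_le_nsmul_eq_zero_of_triangular (presentationCon_relation κ ℓ), smul_zero, smul_zero]
  exact (IsAddUnit.of_nsmul_eq_zero hN (prod_ne_zero_iff.mpr fun i _ => (hκ i).ne')).exists_neg

theorem card_presentationCon_quotient (hκ : ∀ i, 0 < κ i) :
    Nat.card (presentationCon κ ℓ).Quotient = ∏ i, κ i := by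
  let toMonomial : (∀ i, Fin (κ i)) → ι →₀ ℕ := fun b => Finsupp.equivFunOnFinite.symm fun i => b i
  have hbij : Function.Bijective ((presentationCon κ ℓ).mk' ∘ toMonomial) := by
    refine ⟨fun b b' h => ?_, fun x => ?_⟩
    · have := presentationCon_eq_of_mk'_eq κ ℓ (by simp [toMonomial]) (by simp [toMonomial]) h
      funext i
      exact Fin.ext (by simpa [toMonomial] using DFunLike.congr_fun this i)
    · obtain ⟨a, rfl⟩ := AddCon.mk'_surjective x
      obtain ⟨b, hb, hsum⟩ :=
        exists_lt_sum_nsmul_eq_of_triangular hκ (presentationCon_relation κ ℓ) a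
      refine ⟨fun i => ⟨b i, hb i⟩, ?_⟩
      rw [Function.comp_apply, AddCon.mk'_eq_sum_nsmul_single, AddCon.mk'_eq_sum_nsmul_single,
        ← hsum]
      simp [toMonomial]
  rw [← Nat.card_eq_of_bijective _ hbij]
  simp

end Presentation

theorem stmt16_general (t : ℕ) (κ : Fin t → ℕ) (hκ : ∀ i, 2 ≤ κ i)
    (ℓ : Fin t → Fin t → ℕ) :
    ∀ c : AddCon (Fin t →₀ ℕ),
      c = addConGen (fun x y => ∃ i : Fin t,
        x = Finsupp.single i (κ i) ∧
        y = ∑ j ∈ Finset.univ.filter (· < i), Finsupp.single j (ℓ i j)) →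
      (∀ x : c.Quotient, ∃ y : c.Quotient, x + y = 0) ∧
      (∀ i : Fin t,
        c.mk' ((∏ j ∈ Finset.univ.filter (· ≤ i), κ j) • Finsupp.single i 1) = 0) ∧
      Nat.card c.Quotient = ∏ i, κ i := by
  rintro c rfl
  have hκ₀ : ∀ i, 0 < κ i := fun i => by have := hκ i; omega
  exact ⟨presentationCon_exists_add_eq_zero κ ℓ hκ₀, presentationCon_nsmul_single_eq_zero κ ℓ,
    card_presentationCon_quotient κ ℓ hκ₀⟩

theorem stmt16 (t : ℕ) (ht : 1 ≤ t) (κ : Fin t → ℕ) (hκ : ∀ i, 2 ≤ κ i)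
    (ℓ : Fin t → Fin t → ℕ) (hℓ : ∀ i j, j < i → ℓ i j ≤ κ j - 1) :
    ∀ c : AddCon (Fin t →₀ ℕ),
      c = addConGen (fun x y => ∃ i : Fin t,
        x = Finsupp.single i (κ i) ∧
        y = ∑ j ∈ Finset.univ.filter (· < i), Finsupp.single j (ℓ i j)) →
      (∀ x : c.Quotient, ∃ y : c.Quotient, x + y = 0) ∧
      (∀ i : Fin t,
        c.mk' ((∏ j ∈ Finset.univ.filter (· ≤ i), κ j) • Finsupp.single i 1) = 0) ∧
      Nat.card c.Quotient = ∏ i, κ i :=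
  stmt16_general t κ hκ ℓ
end

section
/- Let G be a finite abelian group with generators satisfying the relations a₁^{k₁} = e and a_i^{k_i} = a₁^{λ_{i,1}}⋯a_{i−1}^{λ_{i,i−1}} for i = 2,...,t, and suppose the map (j₁,...,j_t) ↦ a₁^{j₁}⋯a_t^{j_t} agrees on the box ∏_i{0,...,k_i−1} with the canonical normal form. Then for ALL natural numbers ℓ₁,...,ℓ_t (not only those in the box), the normal form of x₁^{ℓ₁}⋯x_t^{ℓ_t} in Γ(K,L) maps under Ψ to a₁^{ℓ₁}⋯a_t^{ℓ_t}; i.e., reduction by the relations commutes with evaluation in G. -/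
/-!
Evaluation `x_i ↦ a_i` is an additive homomorphism `(Fin t →₀ ℕ) → G` which identifies the two
sides of every defining relation, so it factors through the quotient `Γ(K, L)`. Every class of
`Γ(K, L)` contains a reduced exponent vector: going down from the top coordinate, write
`ℓ_i = s k_i + r` and apply the `i`-th relation `s` times; this only changes lower coordinates.
Hence `Ψ`, which agrees with evaluation on reduced vectors, agrees with it everywhere.
-/

open Finsupp

def monomialEval {ι G : Type*} [Fintype ι] [CommGroup G] (a : ι → G) :
    (ι →₀ ℕ) →+ Additive G where
  toFun f := .ofMul (∏ i, a i ^ f i)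
  map_zero' := by simp
  map_add' f g := by simp [pow_add, Finset.prod_mul_distrib]

theorem monomialEval_single {ι G : Type*} [Fintype ι] [CommGroup G]
    (a : ι → G) (i : ι) (n : ℕ) : monomialEval a (single i n) = .ofMul (a i ^ n) := by
  classical
  simp [monomialEval, single_apply]

theorem sum_single_filter_lt_apply_of_le {ι M : Type*} [Fintype ι] [LinearOrder ι]
    [AddCommMonoid M] (v : ι → M) {i j : ι} (h : i ≤ j) :
    (∑ j' ∈ Finset.univ.filter (· < i), single j' (v j')) j = 0 := by
  rw [finsetSum_apply]
  exact Finset.sum_eq_zero fun j' hj' =>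
    single_eq_of_ne ((Finset.mem_filter.1 hj').2.trans_le h).ne'

section MonomialCon

variable {t : ℕ} (k : Fin t → ℕ) (lam : Fin t → Fin t → ℕ)

def monomialRel (x y : Fin t →₀ ℕ) : Prop :=
  ∃ i : Fin t, x = single i (k i) ∧ y = ∑ j ∈ Finset.univ.filter (· < i), single j (lam i j)

noncomputable def monomialCon : AddCon (Fin t →₀ ℕ) := addConGen (monomialRel k lam)

variable {k lam}

theorem monomialCon_le_ker_monomialEval {G : Type*} [CommGroup G] {a : Fin t → G}
    (hrel : ∀ i, a i ^ k i = ∏ j ∈ Finset.univ.filter (· < i), a j ^ lam i j) :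
    monomialCon k lam ≤ AddCon.ker (monomialEval a) := by
  refine AddCon.addConGen_le.2 ?_
  rintro _ _ ⟨i, rfl, rfl⟩
  simp [AddCon.ker_rel, map_sum, monomialEval_single, hrel i]

theorem prod_pow_eq_of_monomialCon {G : Type*} [CommGroup G] {a : Fin t → G}
    (hrel : ∀ i, a i ^ k i = ∏ j ∈ Finset.univ.filter (· < i), a j ^ lam i j)
    {f g : Fin t →₀ ℕ} (h : monomialCon k lam f g) :
    ∏ i, a i ^ f i = ∏ i, a i ^ g i :=
  congrArg Additive.toMul (monomialCon_le_ker_monomialEval hrel h)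

theorem exists_monomialCon_forall_lt (hk : ∀ i, 0 < k i) (f : Fin t →₀ ℕ) :
    ∃ g, monomialCon k lam f g ∧ ∀ i, g i < k i := by
  -- induction on `m`, for exponent vectors whose coordinates `≥ m` are already reduced
  suffices H : ∀ m : ℕ, ∀ f : Fin t →₀ ℕ, (∀ i : Fin t, m ≤ i → f i < k i) →
      ∃ g, monomialCon k lam f g ∧ ∀ i, g i < k i from
    H t f fun i hi => absurd i.isLt (by omega)
  intro m
  induction m with
  | zero => exact fun f hf => ⟨f, (monomialCon k lam).refl f, fun i => hf i (Nat.zero_le _)⟩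
  | succ m ih =>
    intro f hf
    by_cases hm : m < t
    swap
    · exact ih f fun i _ => absurd i.isLt (by omega)
    obtain ⟨i, rfl⟩ : ∃ i : Fin t, (i : ℕ) = m := ⟨⟨m, hm⟩, rfl⟩
    set s := f i / k i
    set f' := update f i (f i % k i) + s • ∑ j ∈ Finset.univ.filter (· < i), single j (lam i j)
    have hsplit : f = update f i (f i % k i) + s • single i (k i) := by
      ext j
      rcases eq_or_ne j i with rfl | hj
      · simp [s, Nat.mod_add_div']
      · simp [hj]
    have hff' : monomialCon k lam f f' := by
      have hrel : monomialCon k lam (single i (k i))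
          (∑ j ∈ Finset.univ.filter (· < i), single j (lam i j)) :=
        AddConGen.Rel.of _ _ ⟨i, rfl, rfl⟩
      have := (monomialCon k lam).add ((monomialCon k lam).refl (update f i (f i % k i)))
        ((monomialCon k lam).nsmul s hrel)
      rwa [← hsplit] at this
    have hf' : ∀ j : Fin t, (i : ℕ) ≤ j → f' j < k j := by
      intro j hj
      have hij : i ≤ j := Fin.le_def.2 hj
      simp only [f', coe_add, coe_smul, Pi.add_apply, Pi.smul_apply,
        sum_single_filter_lt_apply_of_le _ hij, smul_zero, add_zero]
      rcases hij.eq_or_lt with hji | hij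
      · subst hji
        simpa using Nat.mod_lt _ (hk _)
      · simpa [hij.ne'] using hf j hij
    obtain ⟨g, hf'g, hg⟩ := ih f' hf'
    exact ⟨g, (monomialCon k lam).trans hff' hf'g, hg⟩

end MonomialCon

theorem stmt18_general {G : Type*} [CommGroup G] (t : ℕ) (a : Fin t → G)
    (k : Fin t → ℕ) (hk2 : ∀ i, 2 ≤ k i)
    (lam : Fin t → Fin t → ℕ)
    (hrel : ∀ i, a i ^ k i = ∏ j ∈ Finset.univ.filter (· < i), a j ^ lam i j) :
    ∀ c : AddCon (Fin t →₀ ℕ),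
      c = addConGen (fun x y => ∃ i : Fin t,
        x = Finsupp.single i (k i) ∧
        y = ∑ j ∈ Finset.univ.filter (· < i), Finsupp.single j (lam i j)) →
      ∀ Ψ : c.Quotient → G,
        (∀ j : (i : Fin t) → Fin (k i),
          Ψ (c.mk' (∑ i, Finsupp.single i (j i : ℕ))) = ∏ i, a i ^ (j i : ℕ)) →
        ∀ l : Fin t → ℕ,
          Ψ (c.mk' (∑ i, Finsupp.single i (l i))) = ∏ i, a i ^ l i := by
  intro c hc Ψ hΨ l
  change c = monomialCon k lam at hc
  subst hc
  obtain ⟨g, hlg, hg⟩ :=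
    exists_monomialCon_forall_lt (fun i => by linarith [hk2 i]) (∑ i, single i (l i))
  have hΨg : Ψ ((monomialCon k lam).mk' g) = ∏ i, a i ^ g i := by
    simpa only [univ_sum_single] using hΨ fun i => ⟨g i, hg i⟩
  calc Ψ ((monomialCon k lam).mk' (∑ i, single i (l i)))
      = Ψ ((monomialCon k lam).mk' g) := congrArg Ψ ((AddCon.eq _).2 hlg)
    _ = ∏ i, a i ^ (∑ i, single i (l i)) i := hΨg.trans (prod_pow_eq_of_monomialCon hrel hlg).symm
    _ = ∏ i, a i ^ l i := by rw [coe_univ_sum_single]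

theorem stmt18 {G : Type*} [CommGroup G] (t : ℕ) (a : Fin t → G)
    (k : Fin t → ℕ) (hk2 : ∀ i, 2 ≤ k i)
    (lam : Fin t → Fin t → ℕ) (hlam : ∀ i j, j < i → lam i j ≤ k j - 1)
    (hrel : ∀ i, a i ^ k i = ∏ j ∈ Finset.univ.filter (· < i), a j ^ lam i j) :
    ∀ c : AddCon (Fin t →₀ ℕ),
      c = addConGen (fun x y => ∃ i : Fin t,
        x = Finsupp.single i (k i) ∧
        y = ∑ j ∈ Finset.univ.filter (· < i), Finsupp.single j (lam i j)) →
      ∀ Ψ : c.Quotient → G,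
        (∀ j : (i : Fin t) → Fin (k i),
          Ψ (c.mk' (∑ i, Finsupp.single i (j i : ℕ))) = ∏ i, a i ^ (j i : ℕ)) →
        ∀ l : Fin t → ℕ,
          Ψ (c.mk' (∑ i, Finsupp.single i (l i))) = ∏ i, a i ^ l i :=
  stmt18_general t a k hk2 lam hrel
end
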